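/- arXiv:1806.08585 — 2 statements merged into one kernel-verified Lean document; each statement's English description precedes it below -/
import Mathlib

section
/- For every t ∈ ℝ and every s ∈ ℝ with s ≠ 0, the map (h,n) ↦ (h, s • n) is a group isomorphism from (E × F, *_t) (the law with parameter t) onto (E × F, *_{s t}) (the law with parameter s·t). In particular, for all t ≠ 0 the group (E × F, *_t) is isomorphic to (E × F, *_1), while (E × F, *_0) is the abelian group E × F with componentwise addition. (This realizes the ℝ*-action λ⁰_s(h,n,t) = (h, n/s, ts) as a family of group isomorphisms between the fibers, and shows all fibers over t ≠ 0 are isomorphic.) -/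
/-!
Rescaling the fibre coordinate by `s` turns the correction term `(t/2) • L h h'` of `*_t` into
`(s t/2) • L h h'`, because `L` only sees the `E`-components, which the dilation leaves alone.
-/

section HeisenbergDeformation

variable {𝕜 E F : Type*} [Field 𝕜] [AddCommGroup F] [Module 𝕜 F]

def fiberDilation (s : 𝕜) (p : E × F) : E × F :=
  (p.1, s • p.2)

theorem fiberDilation_bijective {s : 𝕜} (hs : s ≠ 0) :
    Function.Bijective (fiberDilation s : E × F → E × F) :=
  Function.bijective_id.prodMap (LinearEquiv.smulOfNeZero 𝕜 F s hs).bijective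

variable [AddCommGroup E] [Module 𝕜 E]

def heisenbergMul (L : E →ₗ[𝕜] E →ₗ[𝕜] F) (t : 𝕜) (p q : E × F) : E × F :=
  (p.1 + q.1, p.2 + q.2 + (t / 2) • L p.1 q.1)

theorem heisenbergMul_zero (L : E →ₗ[𝕜] E →ₗ[𝕜] F) (p q : E × F) :
    heisenbergMul L 0 p q = p + q := by
  simp [heisenbergMul, Prod.ext_iff]

theorem fiberDilation_heisenbergMul (L : E →ₗ[𝕜] E →ₗ[𝕜] F) (s t : 𝕜) (p q : E × F) :
    fiberDilation s (heisenbergMul L t p q) =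
      heisenbergMul L (s * t) (fiberDilation s p) (fiberDilation s q) := by
  simp only [fiberDilation, heisenbergMul, smul_add, smul_smul, mul_div_assoc]

end HeisenbergDeformation

theorem stmt_4_general {E F : Type*} [AddCommGroup E] [Module ℝ E] [AddCommGroup F] [Module ℝ F]
    (L : E →ₗ[ℝ] E →ₗ[ℝ] F)
    (mul : ℝ → E × F → E × F → E × F)
    (hmul : ∀ (t : ℝ) (p q : E × F),
      mul t p q = (p.1 + q.1, p.2 + q.2 + (t / 2) • L p.1 q.1))
    (t s : ℝ) (hs : s ≠ 0)
    (f : E × F → E × F) (hf : ∀ p : E × F, f p = (p.1, s • p.2)) :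
    Function.Bijective f ∧
    (∀ a b : E × F, f (mul t a b) = mul (s * t) (f a) (f b)) ∧
    (∀ a b : E × F, mul 0 a b = a + b) := by
  obtain rfl : mul = heisenbergMul L := funext fun t => funext fun p => funext (hmul t p)
  obtain rfl : f = fiberDilation s := funext hf
  exact ⟨fiberDilation_bijective hs, fiberDilation_heisenbergMul L s t, heisenbergMul_zero L⟩

/-- for every `s ≠ 0`, the map `(h,n) ↦ (h, s • n)` is a group
isomorphism from `(E × F, *_t)` onto `(E × F, *_{s t})`; in particular all the
groups with `t ≠ 0` are isomorphic to the one with `t = 1`, while `*_0` is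
componentwise addition. -/
theorem stmt_4 {E F : Type*} [AddCommGroup E] [Module ℝ E] [AddCommGroup F] [Module ℝ F]
    (L : E →ₗ[ℝ] E →ₗ[ℝ] F) (hL : ∀ h : E, L h h = 0)
    (mul : ℝ → E × F → E × F → E × F)
    (hmul : ∀ (t : ℝ) (p q : E × F),
      mul t p q = (p.1 + q.1, p.2 + q.2 + (t / 2) • L p.1 q.1))
    (t s : ℝ) (hs : s ≠ 0)
    (f : E × F → E × F) (hf : ∀ p : E × F, f p = (p.1, s • p.2)) :
    Function.Bijective f ∧
    (∀ a b : E × F, f (mul t a b) = mul (s * t) (f a) (f b)) ∧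
    (∀ a b : E × F, mul 0 a b = a + b) :=
  stmt_4_general L mul hmul t s hs f hf
end

section
/- For all t, u ∈ ℝ, the operation (h₁,h₂,h₃) * (k₁,k₂,k₃) = (h₁+k₁, h₂+k₂+(t/2)•b₁₁ h₁ k₁, h₃+k₃+(t u/2)•(b₁₂ h₁ k₂ − b₁₂ k₁ h₂) + (t² u/12)•(b₁₂ h₁ (b₁₁ h₁ k₁) + b₁₂ k₁ (b₁₁ k₁ h₁))) makes V₁ × V₂ × V₃ a group, with identity (0,0,0) and with the inverse of (h₁,h₂,h₃) given by (−h₁,−h₂,−h₃). (This is the group law, asserted in the k = 2 remark of Section 6, of the fibers H¹ ⊕ H²/H¹ ⊕ TM/H² of the iterated deformation groupoid dnc³(M×M, M, H¹×{0}, H¹⊕H²/H¹×ℝ×{0}) for a two-step filtration H¹ ⊆ H² ⊆ TM, with b₁₁ and b₁₂ the graded components of the Levi bracket.) -/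
/-!
The law is the Baker–Campbell–Hausdorff product `X + Y + ½[X,Y] + (1/12)([X,[X,Y]] + [Y,[Y,X]])`
of the three-step nilpotent Lie algebra `V₁ ⊕ V₂ ⊕ V₃` whose bracket has graded components
`t • b₁₁` and `t u • b₁₂`. Associativity is then the only nontrivial axiom: after expansion its
third component is `-(t² u / 6)` times the Jacobi identity, up to skew-symmetry of `b₁₁`.
-/

namespace Carnot

variable {K V₁ V₂ V₃ : Type*} [Field K]
  [AddCommGroup V₁] [Module K V₁] [AddCommGroup V₂] [Module K V₂] [AddCommGroup V₃] [Module K V₃]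
  (b₁₁ : V₁ →ₗ[K] V₁ →ₗ[K] V₂) (b₁₂ : V₁ →ₗ[K] V₂ →ₗ[K] V₃) (t u : K)

def mul (h k : V₁ × V₂ × V₃) : V₁ × V₂ × V₃ :=
  (h.1 + k.1,
   h.2.1 + k.2.1 + (t / 2) • b₁₁ h.1 k.1,
   h.2.2 + k.2.2 + (t * u / 2) • (b₁₂ h.1 k.2.1 - b₁₂ k.1 h.2.1)
     + (t ^ 2 * u / 12) • (b₁₂ h.1 (b₁₁ h.1 k.1) + b₁₂ k.1 (b₁₁ k.1 h.1)))

variable {b₁₁ b₁₂ t u}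

theorem mul_assoc [CharZero K] (hb₁₁ : b₁₁.IsAlt)
    (hjac : ∀ x y z : V₁, b₁₂ x (b₁₁ y z) + b₁₂ y (b₁₁ z x) + b₁₂ z (b₁₁ x y) = 0)
    (a b c : V₁ × V₂ × V₃) :
    mul b₁₁ b₁₂ t u (mul b₁₁ b₁₂ t u a b) c = mul b₁₁ b₁₂ t u a (mul b₁₁ b₁₂ t u b c) := by
  have hca : b₁₂ b.1 (b₁₁ c.1 a.1) = -b₁₂ b.1 (b₁₁ a.1 c.1) := by rw [← hb₁₁.neg, map_neg]
  have hab : b₁₂ c.1 (b₁₁ a.1 b.1) = -b₁₂ c.1 (b₁₁ b.1 a.1) := by rw [← hb₁₁.neg, map_neg]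
  simp only [mul, map_add, map_smul, LinearMap.add_apply]
  refine Prod.ext (add_assoc _ _ _) (Prod.ext (by module) ?_)
  linear_combination (norm := module) (-(t ^ 2 * u / 6)) • hjac a.1 b.1 c.1 +
    (t ^ 2 * u / 12) • hca - (t ^ 2 * u / 12) • hab

theorem zero_mul (a : V₁ × V₂ × V₃) : mul b₁₁ b₁₂ t u 0 a = a := by
  simp [mul]

theorem mul_zero (a : V₁ × V₂ × V₃) : mul b₁₁ b₁₂ t u a 0 = a := by
  simp [mul]

theorem mul_neg_cancel (hb₁₁ : b₁₁.IsAlt) (a : V₁ × V₂ × V₃) : mul b₁₁ b₁₂ t u a (-a) = 0 := by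
  simp [mul, hb₁₁.self_eq_zero]

theorem neg_mul_cancel (hb₁₁ : b₁₁.IsAlt) (a : V₁ × V₂ × V₃) : mul b₁₁ b₁₂ t u (-a) a = 0 := by
  simp [mul, hb₁₁.self_eq_zero]

end Carnot

/-- for all `t, u ∈ ℝ` the three-step Carnot law makes
`V₁ × V₂ × V₃` a group, with identity `(0,0,0)` and inverse of `(h₁,h₂,h₃)`
given by `(-h₁,-h₂,-h₃)`. -/
theorem stmt_9 {V₁ V₂ V₃ : Type*} [AddCommGroup V₁] [Module ℝ V₁]
    [AddCommGroup V₂] [Module ℝ V₂] [AddCommGroup V₃] [Module ℝ V₃]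
    (b₁₁ : V₁ →ₗ[ℝ] V₁ →ₗ[ℝ] V₂) (hb₁₁ : ∀ x : V₁, b₁₁ x x = 0)
    (b₁₂ : V₁ →ₗ[ℝ] V₂ →ₗ[ℝ] V₃)
    (hjac : ∀ x y z : V₁, b₁₂ x (b₁₁ y z) + b₁₂ y (b₁₁ z x) + b₁₂ z (b₁₁ x y) = 0)
    (t u : ℝ)
    (mul : V₁ × V₂ × V₃ → V₁ × V₂ × V₃ → V₁ × V₂ × V₃)
    (hmul : ∀ h k : V₁ × V₂ × V₃, mul h k =
      (h.1 + k.1,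
       h.2.1 + k.2.1 + (t / 2) • b₁₁ h.1 k.1,
       h.2.2 + k.2.2 + (t * u / 2) • (b₁₂ h.1 k.2.1 - b₁₂ k.1 h.2.1)
         + (t ^ 2 * u / 12) • (b₁₂ h.1 (b₁₁ h.1 k.1) + b₁₂ k.1 (b₁₁ k.1 h.1)))) :
    (∀ a b c : V₁ × V₂ × V₃, mul (mul a b) c = mul a (mul b c)) ∧
    (∀ a : V₁ × V₂ × V₃, mul ((0 : V₁), (0 : V₂), (0 : V₃)) a = a) ∧
    (∀ a : V₁ × V₂ × V₃, mul a ((0 : V₁), (0 : V₂), (0 : V₃)) = a) ∧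
    (∀ a : V₁ × V₂ × V₃,
      mul a (-a.1, -a.2.1, -a.2.2) = ((0 : V₁), (0 : V₂), (0 : V₃)) ∧
      mul (-a.1, -a.2.1, -a.2.2) a = ((0 : V₁), (0 : V₂), (0 : V₃))) := by
  obtain rfl : mul = Carnot.mul b₁₁ b₁₂ t u := funext₂ hmul
  exact ⟨Carnot.mul_assoc hb₁₁ hjac, Carnot.zero_mul, Carnot.mul_zero,
    fun a => ⟨Carnot.mul_neg_cancel hb₁₁ a, Carnot.neg_mul_cancel hb₁₁ a⟩⟩
end
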